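/- Let r > 0 and α ∈ [0, π/2). Then the function ℓ ↦ g(ℓ, α, α) on [0, ∞) attains its maximum at ℓ₀ = 2·artanh(tanh(r)·cos(α)), and this maximizer is unique: g(ℓ, α, α) < g(ℓ₀, α, α) for every ℓ ≥ 0 with ℓ ≠ ℓ₀. -/

import Mathlib

/-! On the diagonal `α = β`, `g` depends on `r` and `α` only through `t = tanh r · cos α ∈ (0, 1)`,
and its derivative factors as
`(1 + cosh ℓ - sinh ℓ / t) (2 + cosh ℓ - cosh² ℓ + sinh ℓ cosh ℓ / t) / 3`.
For `ℓ ≥ 0` the second factor is at least `2 + cosh ℓ (1 - e^{-ℓ}) > 0`, while the first equals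
`(1 - t) (e^ℓ + 1) (e^{ℓ₀} - e^ℓ) / (2 t e^ℓ)` since `e^{ℓ₀} = (1 + t) / (1 - t)`. Hence `g` is
strictly increasing on `[0, ℓ₀]` and strictly decreasing on `[ℓ₀, ∞)`. -/

open Real

/-- The inverse hyperbolic tangent. -/
noncomputable def artanh (x : ℝ) : ℝ := Real.log ((1 + x) / (1 - x)) / 2

/-- The candle function of hyperbolic `4`-space: `s(ℓ) = sinh³ ℓ`. -/
noncomputable def hypCandle (ℓ : ℝ) : ℝ := (sinh ℓ) ^ 3

/-- The primitive of `hypCandle` vanishing at `0`. -/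
noncomputable def hypCandleI (ℓ : ℝ) : ℝ :=
  2 / 3 + (1 / 3) * (sinh ℓ) ^ 2 * cosh ℓ - (2 / 3) * cosh ℓ

/-- The primitive of `hypCandleI` vanishing at `0`. -/
noncomputable def hypCandleII (ℓ : ℝ) : ℝ :=
  (2 / 3) * ℓ + (1 / 9) * (sinh ℓ) ^ 3 - (2 / 3) * sinh ℓ

/-- The dual test function for the `κ = -1`, `n = 4` isoperimetric problem. -/
noncomputable def hypG (r ℓ α β : ℝ) : ℝ :=
  (4 / 3) * ℓ - hypCandle ℓ / (9 * (tanh r) ^ 2 * cos α * cos β)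
    + (hypCandleI ℓ / (3 * tanh r)) * (1 / cos α + 1 / cos β) - hypCandleII ℓ

open Set

theorem hasDerivAt_hypCandle (x : ℝ) : HasDerivAt hypCandle (3 * sinh x ^ 2 * cosh x) x :=
  ((hasDerivAt_sinh x).pow 3).congr_deriv (by push_cast; ring)

theorem hasDerivAt_hypCandleI (x : ℝ) : HasDerivAt hypCandleI (hypCandle x) x :=
  (((hasDerivAt_const x (2 / 3 : ℝ)).add
    ((((hasDerivAt_sinh x).pow 2).const_mul (1 / 3 : ℝ)).mul (hasDerivAt_cosh x))).sub
    ((hasDerivAt_cosh x).const_mul (2 / 3 : ℝ))).congr_deriv <| by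
      simp only [hypCandle, Pi.pow_apply]
      push_cast
      linear_combination (2 / 3 * sinh x) * cosh_sq x

theorem hasDerivAt_hypCandleII (x : ℝ) : HasDerivAt hypCandleII (hypCandleI x) x :=
  ((((hasDerivAt_id x).const_mul (2 / 3 : ℝ)).add
    (((hasDerivAt_sinh x).pow 3).const_mul (1 / 9 : ℝ))).sub
    ((hasDerivAt_sinh x).const_mul (2 / 3 : ℝ))).congr_deriv <| by
      rw [hypCandleI]; push_cast; ring

noncomputable def hypGDiag (t ℓ : ℝ) : ℝ :=
  (4 / 3) * ℓ - hypCandle ℓ / (9 * t ^ 2) + 2 * hypCandleI ℓ / (3 * t) - hypCandleII ℓ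

theorem hypG_self (r ℓ α : ℝ) : hypG r ℓ α α = hypGDiag (tanh r * cos α) ℓ := by
  simp only [hypG, hypGDiag]; ring

theorem hasDerivAt_hypGDiag {t : ℝ} (ht : t ≠ 0) (x : ℝ) :
    HasDerivAt (hypGDiag t)
      ((1 + cosh x - sinh x / t) * (2 + cosh x - cosh x ^ 2 + sinh x * cosh x / t) / 3) x := by
  refine ((((hasDerivAt_id x).const_mul (4 / 3 : ℝ)).sub
    ((hasDerivAt_hypCandle x).div_const (9 * t ^ 2))).add
    (((hasDerivAt_hypCandleI x).const_mul 2).div_const (3 * t))).sub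
    (hasDerivAt_hypCandleII x) |>.congr_deriv ?_
  rw [hypCandle, hypCandleI]
  field_simp
  linear_combination (9 * t ^ 2 * cosh x - 18 * t * sinh x) * cosh_sq x

theorem exp_two_mul_artanh {t : ℝ} (ht : t ∈ Ioo (-1) 1) :
    exp (2 * _root_.artanh t) = (1 + t) / (1 - t) := by
  rw [_root_.artanh, mul_div_cancel₀ _ two_ne_zero,
    exp_log (div_pos (by linarith [ht.1]) (by linarith [ht.2]))]

theorem artanh_pos_of_mem_Ioo {t : ℝ} (ht : t ∈ Ioo 0 1) : 0 < _root_.artanh t := by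
  have h1 : 1 < (1 + t) / (1 - t) := by rw [one_lt_div (by linarith [ht.2])]; linarith [ht.1]
  exact div_pos (log_pos h1) two_pos

theorem one_add_cosh_sub_sinh_div_eq {t : ℝ} (ht : t ∈ Ioo (-1) 1) (ht0 : t ≠ 0) (x : ℝ) :
    1 + cosh x - sinh x / t =
      (1 - t) * (exp x + 1) * (exp (2 * _root_.artanh t) - exp x) / (2 * t * exp x) := by
  have ht1 : 1 - t ≠ 0 := by linarith [ht.2]
  rw [exp_two_mul_artanh ht, sinh_eq, cosh_eq, exp_neg]
  field_simp
  ring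

theorem one_add_cosh_sub_sinh_div_pos {t x : ℝ} (ht : t ∈ Ioo 0 1)
    (hx : x < 2 * _root_.artanh t) : 0 < 1 + cosh x - sinh x / t := by
  rw [one_add_cosh_sub_sinh_div_eq ⟨by linarith [ht.1], ht.2⟩ ht.1.ne']
  have ht0 := ht.1
  exact div_pos (mul_pos (mul_pos (sub_pos.2 ht.2) (by positivity)) (sub_pos.2 (exp_lt_exp.2 hx)))
    (by positivity)

theorem one_add_cosh_sub_sinh_div_neg {t x : ℝ} (ht : t ∈ Ioo 0 1)
    (hx : 2 * _root_.artanh t < x) : 1 + cosh x - sinh x / t < 0 := by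
  rw [one_add_cosh_sub_sinh_div_eq ⟨by linarith [ht.1], ht.2⟩ ht.1.ne']
  have ht0 := ht.1
  exact div_neg_of_neg_of_pos
    (mul_neg_of_pos_of_neg (mul_pos (sub_pos.2 ht.2) (by positivity)) (sub_neg.2 (exp_lt_exp.2 hx)))
    (by positivity)

theorem two_add_cosh_sub_cosh_sq_add_pos {t x : ℝ} (ht : t ∈ Ioc 0 1) (hx : 0 ≤ x) :
    0 < 2 + cosh x - cosh x ^ 2 + sinh x * cosh x / t := by
  have hsc : 0 ≤ sinh x * cosh x := mul_nonneg (sinh_nonneg_iff.2 hx) (cosh_pos x).le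
  have hdiv : sinh x * cosh x ≤ sinh x * cosh x / t := le_div_self hsc ht.1 ht.2
  have hexp : exp (-x) ≤ 1 := exp_le_one_iff.2 (neg_nonpos.2 hx)
  have key : 2 + cosh x - cosh x ^ 2 + sinh x * cosh x = 2 + cosh x * (1 - exp (-x)) := by
    rw [← cosh_sub_sinh]; ring
  nlinarith [cosh_pos x]

theorem strictMonoOn_hypGDiag {t : ℝ} (ht : t ∈ Ioo 0 1) :
    StrictMonoOn (hypGDiag t) (Icc 0 (2 * _root_.artanh t)) := by
  have hderiv := hasDerivAt_hypGDiag ht.1.ne'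
  refine strictMonoOn_of_hasDerivWithinAt_pos (convex_Icc _ _)
    (HasDerivAt.continuousOn fun x _ ↦ hderiv x) (fun x _ ↦ (hderiv x).hasDerivWithinAt) ?_
  intro x hx
  rw [interior_Icc] at hx
  exact div_pos (mul_pos (one_add_cosh_sub_sinh_div_pos ht hx.2)
    (two_add_cosh_sub_cosh_sq_add_pos ⟨ht.1, ht.2.le⟩ hx.1.le)) three_pos

theorem strictAntiOn_hypGDiag {t : ℝ} (ht : t ∈ Ioo 0 1) :
    StrictAntiOn (hypGDiag t) (Ici (2 * _root_.artanh t)) := by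
  have hderiv := hasDerivAt_hypGDiag ht.1.ne'
  refine strictAntiOn_of_hasDerivWithinAt_neg (convex_Ici _)
    (HasDerivAt.continuousOn fun x _ ↦ hderiv x) (fun x _ ↦ (hderiv x).hasDerivWithinAt) ?_
  intro x hx
  rw [interior_Ici] at hx
  have hx0 : 0 ≤ x := by linarith [artanh_pos_of_mem_Ioo ht, mem_Ioi.1 hx]
  exact div_neg_of_neg_of_pos (mul_neg_of_neg_of_pos (one_add_cosh_sub_sinh_div_neg ht hx)
    (two_add_cosh_sub_cosh_sq_add_pos ⟨ht.1, ht.2.le⟩ hx0)) three_pos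

theorem hypGDiag_lt_of_ne {t ℓ : ℝ} (ht : t ∈ Ioo 0 1) (hℓ : 0 ≤ ℓ)
    (hne : ℓ ≠ 2 * _root_.artanh t) : hypGDiag t ℓ < hypGDiag t (2 * _root_.artanh t) := by
  have hL : 0 ≤ 2 * _root_.artanh t := by linarith [artanh_pos_of_mem_Ioo ht]
  rcases hne.lt_or_gt with h | h
  · exact strictMonoOn_hypGDiag ht ⟨hℓ, h.le⟩ ⟨hL, le_rfl⟩ h
  · exact strictAntiOn_hypGDiag ht self_mem_Ici h.le h

/-- For fixed `α`, the function `ℓ ↦ g(ℓ, α, α)` on `[0, ∞)` attains its maximum at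
`ℓ₀ = 2 artanh (tanh r · cos α)` and only there. -/
theorem hypG_lt_of_ne (r α : ℝ) (hr : 0 < r) (hα : α ∈ Set.Ico 0 (π / 2)) :
    ∀ ℓ : ℝ, 0 ≤ ℓ → ℓ ≠ 2 * _root_.artanh (tanh r * cos α) →
      hypG r ℓ α α < hypG r (2 * _root_.artanh (tanh r * cos α)) α α := by
  intro ℓ hℓ hne
  have htanh : 0 < tanh r := by
    rw [tanh_eq_sinh_div_cosh]; exact div_pos (sinh_pos_iff.2 hr) (cosh_pos r)
  have hcos : 0 < cos α := cos_pos_of_mem_Ioo ⟨by linarith [pi_pos, hα.1], hα.2⟩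
  have ht : tanh r * cos α ∈ Ioo 0 1 :=
    ⟨mul_pos htanh hcos, mul_lt_one_of_nonneg_of_lt_one_left htanh.le (tanh_lt_one r) (cos_le_one α)⟩
  rw [hypG_self, hypG_self]
  exact hypGDiag_lt_of_ne ht hℓ hne
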